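/- arXiv:2008.10819 — 7 statements merged into one kernel-verified Lean document; each statement's English description precedes it below -/
import Mathlib

section
/- Let U ⊆ ℝⁿ be a closed convex set and let u be a Pareto optimal point of U lying in the relative interior of a face F of U. Then every point of F is Pareto optimal. -/
/-!
For `v ∈ F`, relative interiority of `u` extends the segment from `v` through `u` to a point
`u + λ (u - v)` of `F ⊆ U`. If `w ∈ U` dominates `v`, the convex combination of that point and `w`
with weights `1/(1+λ)` and `λ/(1+λ)` equals `u + λ/(1+λ) • (w - v)`, which dominates `u`; Pareto
optimality of `u` then forces `w = v`.
-/

open Classical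

noncomputable def dotp {n : ℕ} (φ u : Fin n → ℝ) : ℝ := ∑ i, φ i * u i

def Pareto {n : ℕ} (U : Set (Fin n → ℝ)) (u : Fin n → ℝ) : Prop :=
  u ∈ U ∧ ∀ v ∈ U, (∀ i, u i ≤ v i) → v = u

def dc {n : ℕ} (U : Set (Fin n → ℝ)) : Set (Fin n → ℝ) :=
  {x | ∃ u ∈ U, ∀ i, x i ≤ u i}

def IsFace {n : ℕ} (U F : Set (Fin n → ℝ)) : Prop :=
  F.Nonempty ∧ F ⊆ U ∧ Convex ℝ F ∧
    ∀ v ∈ U, ∀ w ∈ U, ∀ α : ℝ, 0 < α → α < 1 →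
      α • v + (1 - α) • w ∈ F → v ∈ F ∧ w ∈ F

noncomputable def seqSet {n : ℕ} (U : Set (Fin n → ℝ)) (φ : ℕ → (Fin n → ℝ)) :
    ℕ → Set (Fin n → ℝ)
  | 0 => U
  | t + 1 => {x ∈ seqSet U φ t | ∀ y ∈ seqSet U φ t, dotp (φ t) y ≤ dotp (φ t) x}

def DownClosedIn {n : ℕ} (U : Set (Fin n → ℝ)) (J : Set (Fin n)) : Prop :=
  ∀ u ∈ U, ∀ τ : ℝ, 0 ≤ τ → ∀ K ⊆ J,
    (fun i => if i ∈ K then u i - τ else u i) ∈ U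

def IsPolyhedron {n : ℕ} (P : Set (Fin n → ℝ)) : Prop :=
  ∃ (m : ℕ) (a : Fin m → (Fin n → ℝ)) (b : Fin m → ℝ),
    P = {x | ∀ i, (∑ j, a i j * x j) ≤ b i}

def NormalCone {n : ℕ} (U : Set (Fin n → ℝ)) (u : Fin n → ℝ) : Set (Fin n → ℝ) :=
  {φ | ∀ v ∈ U, dotp φ v ≤ dotp φ u}

def riE {n : ℕ} (G : Set (Fin n → ℝ)) : Set (Fin n → ℝ) :=
  {u ∈ G | ∀ u' ∈ G, ∃ lam : ℝ, 0 < lam ∧ u + lam • (u - u') ∈ G}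

theorem Pareto.of_add_smul_sub_mem {n : ℕ} {U : Set (Fin n → ℝ)} (hU : Convex ℝ U)
    {u v : Fin n → ℝ} (hu : Pareto U u) (hv : v ∈ U) {lam : ℝ} (hlam : 0 < lam)
    (hext : u + lam • (u - v) ∈ U) : Pareto U v := by
  refine ⟨hv, fun w hw hvw => ?_⟩
  have hβ : 0 < lam / (1 + lam) := by positivity
  have hmem : u + (lam / (1 + lam)) • (w - v) ∈ U := by
    convert hU hext hw (by positivity : (0 : ℝ) ≤ 1 / (1 + lam)) hβ.le
      (by field_simp) using 1
    match_scalars <;> field_simp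
  have hle : ∀ i, u i ≤ (u + (lam / (1 + lam)) • (w - v)) i := fun i => by
    simpa using mul_nonneg hβ.le (sub_nonneg.2 (hvw i))
  have hzero : (lam / (1 + lam)) • (w - v) = 0 := add_eq_left.1 (hu.2 _ hmem hle)
  exact sub_eq_zero.1 ((smul_eq_zero.1 hzero).resolve_left hβ.ne')

theorem stmt2_general {n : ℕ} (U F : Set (Fin n → ℝ)) (hcv : Convex ℝ U)
    (hF : IsFace U F) (u : Fin n → ℝ) (hu : u ∈ riE F) (hP : Pareto U u) :
    ∀ v ∈ F, Pareto U v := by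
  intro v hv
  obtain ⟨lam, hlam, hext⟩ := hu.2 v hv
  exact hP.of_add_smul_sub_mem hcv (hF.2.1 hv) hlam (hF.2.1 hext)

theorem stmt2 {n : ℕ} (U F : Set (Fin n → ℝ)) (hcl : IsClosed U) (hcv : Convex ℝ U)
    (hF : IsFace U F) (u : Fin n → ℝ) (hu : u ∈ riE F) (hP : Pareto U u) :
    ∀ v ∈ F, Pareto U v :=
  stmt2_general U F hcv hF u hu hP
end

section
/- If U ⊆ ℝⁿ is closed and convex, then its downward closure dc(U) = U + (−ℝⁿ₊) is convex; and if F is a maximal face of U (every element of F is Pareto optimal in U), then F is also a face of dc(U). -/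
open Classical

theorem stmt4 {n : ℕ} (U : Set (Fin n → ℝ)) (hcl : IsClosed U) (hcv : Convex ℝ U) :
    Convex ℝ (dc U) ∧
      ∀ F : Set (Fin n → ℝ), IsFace U F → (∀ x ∈ F, Pareto U x) → IsFace (dc U) F := by
  constructor
  · intro x hx y hy a b ha hb hab
    obtain ⟨u, hu, hxu⟩ := hx
    obtain ⟨v, hv, hyv⟩ := hy
    refine ⟨a • u + b • v, hcv hu hv ha hb hab, fun i => ?_⟩
    simp only [Pi.add_apply, Pi.smul_apply, smul_eq_mul]
    exact add_le_add (mul_le_mul_of_nonneg_left (hxu i) ha)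
      (mul_le_mul_of_nonneg_left (hyv i) hb)
  · intro F hF hPar
    obtain ⟨hne, hsub, hconv, hface⟩ := hF
    refine ⟨hne, fun x hx => ⟨x, hsub hx, fun i => le_refl _⟩, hconv, ?_⟩
    intro v hv w hw α hα hα1 hz
    obtain ⟨u, hu, hvu⟩ := hv
    obtain ⟨u', hu', hwu⟩ := hw
    have h1α : 0 < 1 - α := by linarith
    set z := α • v + (1 - α) • w with hzdef
    have hzU : z ∈ U := hsub hz
    have hPz := hPar z hz
    have hcomb : α • u + (1 - α) • u' ∈ U := hcv hu hu' hα.le h1α.le (by ring)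
    have hle : ∀ i, z i ≤ (α • u + (1 - α) • u') i := by
      intro i
      simp only [hzdef, Pi.add_apply, Pi.smul_apply, smul_eq_mul]
      exact add_le_add (mul_le_mul_of_nonneg_left (hvu i) hα.le)
        (mul_le_mul_of_nonneg_left (hwu i) h1α.le)
    have heq : α • u + (1 - α) • u' = z := hPz.2 _ hcomb hle
    have hvu' : v = u ∧ w = u' := by
      constructor <;> (funext i)
      · by_contra h
        have hlt : v i < u i := lt_of_le_of_ne (hvu i) (fun he => h he)
        have : z i < (α • u + (1 - α) • u') i := by
          simp only [hzdef, Pi.add_apply, Pi.smul_apply, smul_eq_mul]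
          have := mul_le_mul_of_nonneg_left (hwu i) h1α.le
          nlinarith
        rw [heq] at this
        exact lt_irrefl _ this
      · by_contra h
        have hlt : w i < u' i := lt_of_le_of_ne (hwu i) (fun he => h he)
        have : z i < (α • u + (1 - α) • u') i := by
          simp only [hzdef, Pi.add_apply, Pi.smul_apply, smul_eq_mul]
          have := mul_le_mul_of_nonneg_left (hvu i) hα.le
          nlinarith
        rw [heq] at this
        exact lt_irrefl _ this
    obtain ⟨rfl, rfl⟩ := hvu'
    exact hface v (by assumption) w (by assumption) α hα hα1 hz
end

section
/- Let U ⊆ ℝⁿ be closed and convex and suppose u is a Pareto optimal point of U that lies in the relative interior of an exposed face of dc(U) = U + (−ℝⁿ₊). Then u maximizes some strictly positive normal over U: there exists φ ∈ ℝⁿ with all coordinates > 0 such that ⟨φ, u⟩ ≥ ⟨φ, v⟩ for all v ∈ U. -/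
open Classical

open Topology

lemma extend_ri {n : ℕ} {F : Set (Fin n → ℝ)} {u v : Fin n → ℝ}
    (hu : u ∈ intrinsicInterior ℝ F) (hv : v ∈ F) :
    ∃ ε : ℝ, 0 < ε ∧ u + ε • (u - v) ∈ F := by
  obtain ⟨u0, hu0, hcoe⟩ := mem_intrinsicInterior.1 hu
  rw [mem_interior_iff_mem_nhds, nhds_subtype_eq_comap, Filter.mem_comap] at hu0
  obtain ⟨V, hV, hVF⟩ := hu0
  rw [hcoe] at hV
  set h : ℝ → (Fin n → ℝ) := fun t => v + t • (u - v) with hh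
  have hcont : Continuous h := continuous_const.add (continuous_id.smul continuous_const)
  have h1 : h 1 = u := by simp [hh]
  have hmemspan : ∀ t : ℝ, h t ∈ affineSpan ℝ F := by
    intro t
    have := AffineSubspace.smul_vsub_vadd_mem (affineSpan ℝ F) t
      (subset_affineSpan ℝ F (intrinsicInterior_subset hu))
      (subset_affineSpan ℝ F hv) (subset_affineSpan ℝ F hv)
    simpa [hh, vsub_eq_sub, vadd_eq_add, add_comm] using this
  have hev : ∀ᶠ t in 𝓝[>] (1:ℝ), h t ∈ V := by
    have ht : Filter.Tendsto h (𝓝 1) (𝓝 u) := by rw [← h1]; exact hcont.tendsto 1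
    exact (ht.eventually_mem hV).filter_mono nhdsWithin_le_nhds
  obtain ⟨t, htV, ht1⟩ := (hev.and self_mem_nhdsWithin).exists
  refine ⟨t - 1, by simpa using ht1, ?_⟩
  have hF : h t ∈ F := hVF (Set.mem_preimage.2 (show ((⟨h t, hmemspan t⟩ : affineSpan ℝ F) : Fin n → ℝ) ∈ V from htV))
  have : u + (t - 1) • (u - v) = h t := by
    simp only [hh]; module
  rwa [this]

def ind {n : ℕ} (i : Fin n) : Fin n → ℝ := fun j => if j = i then 1 else 0

lemma dotp_sub_ind {n : ℕ} (ψ u : Fin n → ℝ) (i : Fin n) :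
    dotp ψ (u - ind i) = dotp ψ u - ψ i := by
  simp only [dotp, Pi.sub_apply, ind, mul_sub, Finset.sum_sub_distrib]
  congr 1
  rw [Finset.sum_eq_single i]
  · simp
  · intro j _ hj; simp [hj]
  · simp

theorem stmt11 {n : ℕ} (U : Set (Fin n → ℝ)) (hcl : IsClosed U) (hcv : Convex ℝ U)
    (u : Fin n → ℝ) (hP : Pareto U u)
    (hexp : ∃ ψ : Fin n → ℝ, ψ ≠ 0 ∧
      u ∈ intrinsicInterior ℝ {x ∈ dc U | ∀ y ∈ dc U, dotp ψ y ≤ dotp ψ x}) :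
    ∃ φ : Fin n → ℝ, (∀ i, 0 < φ i) ∧ ∀ v ∈ U, dotp φ v ≤ dotp φ u := by
  obtain ⟨ψ, hψne, hmem⟩ := hexp
  set F : Set (Fin n → ℝ) := {x ∈ dc U | ∀ y ∈ dc U, dotp ψ y ≤ dotp ψ x} with hF
  have huF : u ∈ F := intrinsicInterior_subset hmem
  obtain ⟨⟨w0, hw0U, hw0⟩, hmax⟩ := huF
  -- every point below u is in dc U
  have hdc : ∀ x : Fin n → ℝ, (∀ i, x i ≤ u i) → x ∈ dc U :=
    fun x hx => ⟨w0, hw0U, fun i => (hx i).trans (hw0 i)⟩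
  have hψpos : ∀ i, 0 < ψ i := by
    intro i
    by_contra hneg
    push_neg at hneg
    -- first, ψ i ≥ 0
    have hmem1 : u - ind i ∈ dc U := by
      refine hdc _ fun j => ?_
      simp only [Pi.sub_apply, ind]
      split <;> linarith
    have h1 := hmax _ hmem1
    rw [dotp_sub_ind] at h1
    have hge : 0 ≤ ψ i := by linarith
    have hzero : ψ i = 0 := le_antisymm hneg hge
    -- v := u - single i 1 is in F
    have hvF : u - ind i ∈ F := by
      refine ⟨hmem1, fun y hy => ?_⟩
      rw [dotp_sub_ind, hzero]
      simpa using hmax y hy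
    obtain ⟨ε, hε, hεF⟩ := extend_ri hmem hvF
    have hdiff : u - (u - ind i) = ind i := by module
    rw [hdiff] at hεF
    -- z := u + ε • single i 1 ∈ F ⊆ dc U
    obtain ⟨w, hwU, hwle⟩ := hεF.1
    have hule : ∀ j, u j ≤ w j := by
      intro j
      have := hwle j
      simp only [Pi.add_apply, Pi.smul_apply, ind, smul_eq_mul] at this
      rcases eq_or_ne j i with rfl | hji
      · simp at this; nlinarith
      · simp [hji] at this; linarith
    have hwu : w = u := hP.2 w hwU hule
    have := hwle i
    rw [hwu] at this
    simp [ind] at this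
    nlinarith
  exact ⟨ψ, hψpos, fun v hv => hmax v ⟨v, hv, fun i => le_refl _⟩⟩
end

section
/- If U ⊆ ℝⁿ is a closed convex set such that every maximal face of dc(U) is exposed, then every Pareto optimal point of U maximizes a strictly positive linear functional over U, i.e., U^P = U⁺⁺. -/
/-! Let `u` be Pareto optimal in `U`, hence in `D = dc U`. The minimal face of `D` containing `u`
consists of Pareto optimal points of `D`, since any improvement of one of its points could be
transported to an improvement of `u`. By hypothesis it is exposed by some `ψ`, and `ψ` must be
strictly positive: if `ψ j ≤ 0`, lowering the `j`-th coordinate of `u` would give another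
maximizer of `ψ` over `D`, which is dominated by `u`. -/

open Classical

section MinimalFace

variable {E : Type*} [AddCommGroup E] [Module ℝ E] {D : Set E} {u v w x : E}

def minimalFace (D : Set E) (u : E) : Set E :=
  {x | x ∈ D ∧ ∃ l : ℝ, 0 < l ∧ u + l • (u - x) ∈ D}

theorem self_mem_minimalFace (hu : u ∈ D) : u ∈ minimalFace D u :=
  ⟨hu, 1, one_pos, by simpa using hu⟩

theorem Convex.add_smul_sub_mem_of_le (hD : Convex ℝ D) (hu : u ∈ D) {l l' : ℝ}
    (hl' : 0 < l') (hle : l' ≤ l) (h : u + l • (u - x) ∈ D) : u + l' • (u - x) ∈ D := by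
  have hl : 0 < l := hl'.trans_le hle
  convert hD.add_smul_sub_mem hu h ⟨(div_pos hl' hl).le, (div_le_one hl).2 hle⟩ using 2
  rw [add_sub_cancel_left, smul_smul, div_mul_cancel₀ _ hl.ne']

theorem Convex.convex_minimalFace (hD : Convex ℝ D) (hu : u ∈ D) :
    Convex ℝ (minimalFace D u) := by
  rintro x ⟨hxD, lx, hlx, hx⟩ y ⟨hyD, ly, hly, hy⟩ a b ha hb hab
  set m := min lx ly
  have hm : 0 < m := lt_min hlx hly
  have hcomb := hD (hD.add_smul_sub_mem_of_le hu hm (min_le_left _ _) hx)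
    (hD.add_smul_sub_mem_of_le hu hm (min_le_right _ _) hy) ha hb hab
  have heq : a • (u + m • (u - x)) + b • (u + m • (u - y))
      = (a + b) • u + m • ((a + b) • u - (a • x + b • y)) := by module
  rw [heq, hab, one_smul] at hcomb
  exact ⟨hD hxD hyD ha hb hab, m, hm, hcomb⟩

theorem Convex.left_mem_minimalFace (hD : Convex ℝ D) (hv : v ∈ D) (hw : w ∈ D) {α : ℝ}
    (hα0 : 0 < α) (hα1 : α < 1) (h : α • v + (1 - α) • w ∈ minimalFace D u) :
    v ∈ minimalFace D u := by
  obtain ⟨-, l, hl, hp⟩ := h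
  have hd : 0 < 1 + l * (1 - α) := by nlinarith
  refine ⟨hv, l * α / (1 + l * (1 - α)), by positivity, ?_⟩
  -- pull the point `u + l • (u - p)` back towards `w` until the `w`-component cancels
  have hcomb := hD hp hw (a := 1 / (1 + l * (1 - α))) (b := l * (1 - α) / (1 + l * (1 - α)))
    (by positivity) (div_nonneg (by nlinarith) hd.le) (by field_simp)
  convert hcomb using 1
  match_scalars <;> field_simp <;> ring

end MinimalFace

section Pareto

variable {n : ℕ} {U D : Set (Fin n → ℝ)} {u x : Fin n → ℝ}

theorem subset_dc : U ⊆ dc U :=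
  fun u hu => ⟨u, hu, fun _ => le_rfl⟩

theorem isLowerSet_dc : IsLowerSet (dc U) :=
  fun _ _ hyx ⟨w, hw, hxw⟩ => ⟨w, hw, fun i => (hyx i).trans (hxw i)⟩

theorem Convex.dc (hU : Convex ℝ U) : Convex ℝ (dc U) := by
  rintro x ⟨ux, hux, hxle⟩ y ⟨uy, huy, hyle⟩ a b ha hb hab
  refine ⟨a • ux + b • uy, hU hux huy ha hb hab, fun i => ?_⟩
  simp only [Pi.add_apply, Pi.smul_apply, smul_eq_mul]
  exact add_le_add (mul_le_mul_of_nonneg_left (hxle i) ha)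
    (mul_le_mul_of_nonneg_left (hyle i) hb)

theorem Pareto.dc (hu : Pareto U u) : Pareto (dc U) u := by
  refine ⟨subset_dc hu.1, fun v ⟨w, hw, hvw⟩ huv => ?_⟩
  have hwu : w = u := hu.2 w hw fun i => (huv i).trans (hvw i)
  subst hwu
  exact funext fun i => le_antisymm (hvw i) (huv i)

theorem Pareto.of_forall_dotp_le {φ : Fin n → ℝ} (hu : u ∈ U) (hφ : ∀ i, 0 < φ i)
    (hmax : ∀ v ∈ U, dotp φ v ≤ dotp φ u) : Pareto U u := by
  refine ⟨hu, fun v hv huv => ?_⟩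
  by_contra hne
  obtain ⟨i, hi⟩ : ∃ i, u i < v i := by
    by_contra! h
    exact hne (funext fun i => le_antisymm (h i) (huv i))
  have hlt : dotp φ u < dotp φ v := Finset.sum_lt_sum
    (fun j _ => mul_le_mul_of_nonneg_left (huv j) (hφ j).le)
    ⟨i, Finset.mem_univ i, mul_lt_mul_of_pos_left hi (hφ i)⟩
  exact (hmax v hv).not_gt hlt

theorem isFace_minimalFace (hD : Convex ℝ D) (hu : u ∈ D) : IsFace D (minimalFace D u) := by
  refine ⟨⟨u, self_mem_minimalFace hu⟩, fun x hx => hx.1, hD.convex_minimalFace hu,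
    fun v hv w hw α hα0 hα1 h => ⟨hD.left_mem_minimalFace hv hw hα0 hα1 h, ?_⟩⟩
  refine hD.left_mem_minimalFace hw hv (sub_pos.2 hα1) (sub_lt_self 1 hα0) ?_
  rwa [sub_sub_cancel, add_comm]

theorem Pareto.of_mem_minimalFace (hD : Convex ℝ D) (hu : Pareto D u)
    (hx : x ∈ minimalFace D u) : Pareto D x := by
  obtain ⟨hxD, l, hl, hp⟩ := hx
  refine ⟨hxD, fun w hw hxw => ?_⟩
  set t := l / (1 + l) with ht_def
  have ht : 0 < t := by positivity
  -- `u + t • (w - x)` lies on the segment from `u + l • (u - x)` to `w` and dominates `u`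
  have hq : u + t • (w - x) ∈ D := by
    convert hD.add_smul_sub_mem hp hw ⟨ht.le, (div_le_one (by positivity)).2 (by linarith)⟩
      using 1
    match_scalars <;> simp only [ht_def] <;> field_simp <;> ring
  have hqu := hu.2 _ hq fun i => by
    simpa using mul_nonneg ht.le (sub_nonneg.2 (hxw i))
  simpa [ht.ne', sub_eq_zero] using hqu

theorem IsLowerSet.pos_of_forall_maximizer_pareto (hD : IsLowerSet D) {ψ : Fin n → ℝ}
    (hu : u ∈ D) (hmax : ∀ y ∈ D, dotp ψ y ≤ dotp ψ u)
    (hpar : ∀ x ∈ D, (∀ y ∈ D, dotp ψ y ≤ dotp ψ x) → Pareto D x) (j : Fin n) :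
    0 < ψ j := by
  by_contra! hψ
  set y := u - Pi.single j 1
  have hyu : y ≤ u := sub_le_self u (Pi.single_nonneg.2 zero_le_one)
  have hyD : y ∈ D := hD hyu hu
  have hψy : dotp ψ y = dotp ψ u - ψ j := by
    simp only [y, dotp, Pi.sub_apply, mul_sub, Finset.sum_sub_distrib]
    simp [Pi.single_apply]
  have hyu' := (hpar y hyD fun z hz => (hmax z hz).trans (by linarith)).2 u hu hyu
  have hj := congrFun hyu' j
  simp only [y, Pi.sub_apply, Pi.single_eq_same] at hj
  linarith

end Pareto

theorem stmt13_general {n : ℕ} (U : Set (Fin n → ℝ)) (hcv : Convex ℝ U)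
    (hexp : ∀ F : Set (Fin n → ℝ), IsFace (dc U) F → (∀ x ∈ F, Pareto (dc U) x) →
      ∃ ψ : Fin n → ℝ, ψ ≠ 0 ∧ F = {x ∈ dc U | ∀ y ∈ dc U, dotp ψ y ≤ dotp ψ x}) :
    {u | Pareto U u} =
      {u ∈ U | ∃ φ : Fin n → ℝ, (∀ i, 0 < φ i) ∧ ∀ v ∈ U, dotp φ v ≤ dotp φ u} := by
  ext u
  refine ⟨fun hu => ?_, fun ⟨huU, φ, hφ, hmax⟩ => Pareto.of_forall_dotp_le huU hφ hmax⟩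
  have hD := hcv.dc
  have huD : u ∈ dc U := subset_dc hu.1
  have hparF (x) (hx : x ∈ minimalFace (dc U) u) : Pareto (dc U) x :=
    hu.dc.of_mem_minimalFace hD hx
  obtain ⟨ψ, -, hF⟩ := hexp _ (isFace_minimalFace hD huD) hparF
  have hmax : ∀ y ∈ dc U, dotp ψ y ≤ dotp ψ u := (hF ▸ self_mem_minimalFace huD).2
  have hψ : ∀ j, 0 < ψ j := isLowerSet_dc.pos_of_forall_maximizer_pareto huD hmax
    fun x hx hxmax => hparF x (hF ▸ ⟨hx, hxmax⟩)
  exact ⟨hu.1, ψ, hψ, fun v hv => hmax v (subset_dc hv)⟩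

theorem stmt13 {n : ℕ} (U : Set (Fin n → ℝ)) (hcl : IsClosed U) (hcv : Convex ℝ U)
    (hexp : ∀ F : Set (Fin n → ℝ), IsFace (dc U) F → (∀ x ∈ F, Pareto (dc U) x) →
      ∃ ψ : Fin n → ℝ, ψ ≠ 0 ∧ F = {x ∈ dc U | ∀ y ∈ dc U, dotp ψ y ≤ dotp ψ x}) :
    {u | Pareto U u} =
      {u ∈ U | ∃ φ : Fin n → ℝ, (∀ i, 0 < φ i) ∧ ∀ v ∈ U, dotp φ v ≤ dotp φ u} :=
  stmt13_general U hcv hexp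
end

section
/- If P ⊆ ℝⁿ is a polyhedron (finite intersection of closed half-spaces), then its downward closure dc(P) = P + (−ℝⁿ₊) is a polyhedron. -/
open Classical

private lemma sum_update_aux {n : ℕ} (a x : Fin n → ℝ) (i : Fin n) (s : ℝ) :
    ∑ j, a j * Function.update x i s j = (∑ j, a j * x j) + a i * (s - x i) := by
  have h : ∑ j, (a j * Function.update x i s j - a j * x j) = a i * (s - x i) := by
    rw [Finset.sum_eq_single i]
    · simp [Function.update_self]; ring
    · intro j _ hj; simp [Function.update_of_ne hj]
    · simp
  rw [Finset.sum_sub_distrib] at h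
  linarith

private lemma isPoly_of_fintype {n : ℕ} {K : Type} [Fintype K]
    (a : K → Fin n → ℝ) (b : K → ℝ) :
    IsPolyhedron {x : Fin n → ℝ | ∀ k, (∑ j, a k j * x j) ≤ b k} := by
  refine ⟨Fintype.card K, fun i => a ((Fintype.equivFin K).symm i),
    fun i => b ((Fintype.equivFin K).symm i), ?_⟩
  ext x
  constructor
  · intro h i; exact h _
  · intro h k
    have := h (Fintype.equivFin K k)
    simpa using this

private lemma dc1_poly {n : ℕ} (i : Fin n) {P : Set (Fin n → ℝ)} (hP : IsPolyhedron P) :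
    IsPolyhedron {x | ∃ s : ℝ, x i ≤ s ∧ Function.update x i s ∈ P} := by
  classical
  obtain ⟨m, a, b, rfl⟩ := hP
  set A : Fin m ⊕ Fin m × Fin m → Fin n → ℝ := fun k =>
    match k with
    | .inl k => if 0 ≤ a k i then a k else 0
    | .inr (k, l) => if 0 < a k i ∧ a l i < 0 then
        (fun j => (-(a l i)) * a k j + a k i * a l j) else 0
  set B : Fin m ⊕ Fin m × Fin m → ℝ := fun k =>
    match k with
    | .inl k => if 0 ≤ a k i then b k else 0
    | .inr (k, l) => if 0 < a k i ∧ a l i < 0 then (-(a l i)) * b k + a k i * b l else 0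
  have key : {x : Fin n → ℝ | ∃ s : ℝ, x i ≤ s ∧
      Function.update x i s ∈ {x | ∀ k, (∑ j, a k j * x j) ≤ b k}}
      = {x | ∀ k, (∑ j, A k j * x j) ≤ B k} := by
    ext x
    simp only [Set.mem_setOf_eq]
    constructor
    · rintro ⟨s, hs, hu⟩ k
      have hu' : ∀ k, (∑ j, a k j * x j) + a k i * (s - x i) ≤ b k := by
        intro k; have := hu k; rwa [sum_update_aux] at this
      match k with
      | .inl k =>
        by_cases hk : 0 ≤ a k i
        · simp only [A, B, if_pos hk]
          nlinarith [hu' k, mul_nonneg hk (sub_nonneg.2 hs)]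
        · simp [A, B, if_neg hk]
      | .inr (k, l) =>
        by_cases hkl : 0 < a k i ∧ a l i < 0
        · obtain ⟨hp, hq⟩ := hkl
          simp only [A, B, if_pos (⟨hp, hq⟩ : 0 < a k i ∧ a l i < 0)]
          have e : ∑ j, ((-(a l i)) * a k j + a k i * a l j) * x j
              = (-(a l i)) * (∑ j, a k j * x j) + a k i * (∑ j, a l j * x j) := by
            rw [Finset.mul_sum, Finset.mul_sum, ← Finset.sum_add_distrib]
            congr 1; ext j; ring
          rw [e]
          have h1 := hu' k
          have h2 := hu' l
          nlinarith [mul_le_mul_of_nonneg_left h1 (le_of_lt (neg_pos.2 hq)),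
            mul_le_mul_of_nonneg_left h2 (le_of_lt hp)]
        · simp [A, B, if_neg hkl]
    · intro H
      set d : Fin m → ℝ := fun k => b k - ∑ j, a k j * x j with hd
      have hA : ∀ k, 0 ≤ a k i → 0 ≤ d k := by
        intro k hk
        have := H (.inl k)
        simp only [A, B, if_pos hk] at this
        simp only [hd]; linarith
      have hC : ∀ k l, 0 < a k i → a l i < 0 →
          0 ≤ (-(a l i)) * d k + a k i * d l := by
        intro k l hp hq
        have hh := H (.inr (k, l))
        simp only [A, B, if_pos (⟨hp, hq⟩ : 0 < a k i ∧ a l i < 0)] at hh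
        have e : ∑ j, ((-(a l i)) * a k j + a k i * a l j) * x j
            = (-(a l i)) * (∑ j, a k j * x j) + a k i * (∑ j, a l j * x j) := by
          rw [Finset.mul_sum, Finset.mul_sum, ← Finset.sum_add_distrib]
          congr 1; ext j; ring
        rw [e] at hh
        simp only [hd]
        nlinarith [hh]
      suffices h : ∃ t : ℝ, 0 ≤ t ∧ ∀ k, a k i * t ≤ d k by
        obtain ⟨t, ht0, ht⟩ := h
        refine ⟨x i + t, by linarith, fun k => ?_⟩
        rw [sum_update_aux]
        have := ht k
        simp only [hd] at this
        have e2 : x i + t - x i = t := by ring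
        rw [e2]; linarith
      by_cases hne : (Finset.univ.filter (fun k => 0 < a k i)).Nonempty
      · refine ⟨(Finset.univ.filter fun k => 0 < a k i).inf' hne (fun k => d k / a k i),
          ?_, ?_⟩
        · apply Finset.le_inf'
          intro k hk
          have hp : 0 < a k i := (Finset.mem_filter.1 hk).2
          exact div_nonneg (hA k hp.le) hp.le
        · intro k
          rcases lt_trichotomy (a k i) 0 with hneg | hzero | hpos
          · obtain ⟨k0, hk0, he⟩ :=
              Finset.exists_mem_eq_inf' hne (fun k => d k / a k i)
            rw [he]
            have hp : 0 < a k0 i := (Finset.mem_filter.1 hk0).2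
            have hc := hC k0 k hp hneg
            have hdk0 : 0 ≤ d k0 := hA k0 hp.le
            rw [mul_div_assoc', div_le_iff₀ hp]
            nlinarith [hc]
          · rw [hzero, zero_mul]; exact hA k hzero.ge
          · have hk : k ∈ Finset.univ.filter (fun k => 0 < a k i) :=
              Finset.mem_filter.2 ⟨Finset.mem_univ k, hpos⟩
            have hle := Finset.inf'_le (fun k => d k / a k i) hk
            calc a k i * _ ≤ a k i * (d k / a k i) :=
                  mul_le_mul_of_nonneg_left hle hpos.le
              _ = d k := by field_simp
      · refine ⟨(insert (0:ℝ)
          (Finset.univ.image fun k => if a k i < 0 then d k / a k i else 0)).max'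
            (by simp), ?_, ?_⟩
        · exact Finset.le_max' _ 0 (Finset.mem_insert_self _ _)
        · intro k
          rcases lt_trichotomy (a k i) 0 with hneg | hzero | hpos
          · have hmem : d k / a k i ∈ insert (0:ℝ)
                (Finset.univ.image fun k => if a k i < 0 then d k / a k i else 0) :=
              Finset.mem_insert_of_mem (Finset.mem_image.2
                ⟨k, Finset.mem_univ k, by rw [if_pos hneg]⟩)
            have hle := Finset.le_max' _ _ hmem
            nlinarith [div_mul_cancel₀ (d k) (ne_of_lt hneg), hle]
          · rw [hzero, zero_mul]; exact hA k hzero.ge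
          · exact absurd ⟨k, Finset.mem_filter.2 ⟨Finset.mem_univ k, hpos⟩⟩ hne
  rw [key]
  exact isPoly_of_fintype A B

private lemma dcOn_poly {n : ℕ} {P : Set (Fin n → ℝ)} (hP : IsPolyhedron P)
    (J : Finset (Fin n)) :
    IsPolyhedron {x | ∃ u ∈ P, (∀ i ∈ J, x i ≤ u i) ∧ ∀ i ∉ J, x i = u i} := by
  classical
  induction J using Finset.induction_on with
  | empty =>
    have : {x | ∃ u ∈ P, (∀ i ∈ (∅ : Finset (Fin n)), x i ≤ u i) ∧
        ∀ i ∉ (∅ : Finset (Fin n)), x i = u i} = P := by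
      ext x
      constructor
      · rintro ⟨u, hu, -, h2⟩
        have : x = u := funext fun i => h2 i (by simp)
        rwa [this]
      · intro hx
        exact ⟨x, hx, by simp, fun i _ => rfl⟩
    rwa [this]
  | @insert i J hi ih =>
    have key : {x | ∃ u ∈ P, (∀ j ∈ insert i J, x j ≤ u j) ∧ ∀ j ∉ insert i J, x j = u j}
        = {x | ∃ s : ℝ, x i ≤ s ∧ Function.update x i s ∈
            {x | ∃ u ∈ P, (∀ j ∈ J, x j ≤ u j) ∧ ∀ j ∉ J, x j = u j}} := by
      ext x
      constructor
      · rintro ⟨u, hu, h1, h2⟩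
        refine ⟨u i, h1 i (Finset.mem_insert_self i J), u, hu, ?_, ?_⟩
        · intro j hj
          have hji : j ≠ i := fun h => hi (h ▸ hj)
          rw [Function.update_of_ne hji]
          exact h1 j (Finset.mem_insert_of_mem hj)
        · intro j hj
          rcases eq_or_ne j i with rfl | hji
          · rw [Function.update_self]
          · rw [Function.update_of_ne hji]
            exact h2 j (by simp [hji, hj])
      · rintro ⟨s, hs, u, hu, h1, h2⟩
        refine ⟨u, hu, ?_, ?_⟩
        · intro j hj
          rcases Finset.mem_insert.1 hj with rfl | hj'
          · have := h2 j hi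
            rw [Function.update_self] at this
            rw [← this]; exact hs
          · have hji : j ≠ i := fun h => hi (h ▸ hj')
            have := h1 j hj'
            rwa [Function.update_of_ne hji] at this
        · intro j hj
          have hji : j ≠ i := fun h => hj (h ▸ Finset.mem_insert_self i J)
          have := h2 j (fun h => hj (Finset.mem_insert_of_mem h))
          rwa [Function.update_of_ne hji] at this
    rw [key]
    exact dc1_poly i ih

theorem stmt14 {n : ℕ} (P : Set (Fin n → ℝ)) (hP : IsPolyhedron P) :
    IsPolyhedron (dc P) := by
  have := dcOn_poly hP Finset.univ
  have e : dc P = {x | ∃ u ∈ P, (∀ i ∈ (Finset.univ : Finset (Fin n)), x i ≤ u i) ∧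
      ∀ i ∉ (Finset.univ : Finset (Fin n)), x i = u i} := by
    ext x
    simp [dc]
  rwa [e]
end

section
/- Let u ∈ U be Pareto optimal in a closed convex set U ⊆ ℝⁿ, and let (φ¹,...,φᵀ) be nonzero nonnegative normals with φᵀ strictly positive that u sequentially maximizes. Define W(u') = min_{t ∈ {1,...,T}} ⟨φᵗ, u' − u⟩. Then u ∈ argmax_{u' ∈ U} W(u'), and moreover every element of argmax_{u' ∈ U} W(u') is Pareto optimal in U. -/
open Classical

lemma dotp_sub {n : ℕ} (φ x y : Fin n → ℝ) : dotp φ (x - y) = dotp φ x - dotp φ y := by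
  simp [dotp, mul_sub, Finset.sum_sub_distrib]

lemma seqSet_antitone {n : ℕ} (U : Set (Fin n → ℝ)) (φ : ℕ → (Fin n → ℝ)) :
    ∀ s t, s ≤ t → seqSet U φ t ⊆ seqSet U φ s := by
  intro s t h
  induction t with
  | zero => simp_all
  | succ k ih =>
    rcases Nat.eq_or_lt_of_le h with rfl | h'
    · exact subset_rfl
    · exact (fun x hx => ih (Nat.lt_succ_iff.mp h') hx.1)

lemma seqSet_climb {n T : ℕ} (U : Set (Fin n → ℝ)) (φ : ℕ → (Fin n → ℝ))
    (u : Fin n → ℝ) (hu : u ∈ seqSet U φ T) (w : Fin n → ℝ) (hwU : w ∈ U)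
    (h : ∀ t < T, dotp (φ t) u ≤ dotp (φ t) w) :
    ∀ s, s ≤ T → w ∈ seqSet U φ s := by
  intro s
  induction s with
  | zero => intro _; exact hwU
  | succ k ih =>
    intro hk
    have hwk : w ∈ seqSet U φ k := ih (Nat.le_of_succ_le hk)
    have huk : u ∈ seqSet U φ (k+1) := seqSet_antitone U φ (k+1) T hk hu
    exact ⟨hwk, fun y hy => (huk.2 y hy).trans (h k hk)⟩

theorem stmt15 {n T : ℕ} (U : Set (Fin n → ℝ)) (hcl : IsClosed U) (hcv : Convex ℝ U)
    (hT : 0 < T) (φ : ℕ → (Fin n → ℝ))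
    (hnn : ∀ t < T, (∀ i, 0 ≤ φ t i) ∧ φ t ≠ 0)
    (hpos : ∀ i, 0 < φ (T - 1) i)
    (u : Fin n → ℝ) (hP : Pareto U u) (hu : u ∈ seqSet U φ T)
    (W : (Fin n → ℝ) → ℝ)
    (hW : ∀ u', W u' = (Finset.range T).inf' (Finset.nonempty_range_iff.mpr hT.ne')
      (fun t => dotp (φ t) (u' - u))) :
    (∀ u' ∈ U, W u' ≤ W u) ∧ ∀ v ∈ U, (∀ u' ∈ U, W u' ≤ W v) → Pareto U v := by
  have hsub : ∀ x y : Fin n → ℝ, ∀ t, dotp (φ t) (x - y) = dotp (φ t) x - dotp (φ t) y :=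
    fun x y t => dotp_sub _ x y
  have hWu : W u = 0 := by
    rw [hW]
    have : ∀ t ∈ Finset.range T, dotp (φ t) (u - u) = (0:ℝ) := by
      intro t _; simp [hsub, dotp]
    rw [Finset.inf'_congr _ rfl this]
    exact Finset.inf'_const _ 0
  have hmem0 : (0:ℕ) ∈ Finset.range T := Finset.mem_range.mpr hT
  have h1 : ∀ u' ∈ U, W u' ≤ 0 := by
    intro u' hu'
    have h0 : u ∈ seqSet U φ 1 := seqSet_antitone U φ 1 T hT hu
    have : dotp (φ 0) u' ≤ dotp (φ 0) u := h0.2 u' hu'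
    calc W u' ≤ dotp (φ 0) (u' - u) := by rw [hW]; exact Finset.inf'_le _ hmem0
    _ ≤ 0 := by rw [hsub]; linarith
  constructor
  · intro u' hu'; rw [hWu]; exact h1 u' hu'
  · intro v hvU hv
    have hWv : W v = 0 :=
      le_antisymm (h1 v hvU) (hWu ▸ hv u hP.1)
    have hvt : ∀ t < T, dotp (φ t) u ≤ dotp (φ t) v := by
      intro t ht
      have : W v ≤ dotp (φ t) (v - u) := by
        rw [hW]; exact Finset.inf'_le _ (Finset.mem_range.mpr ht)
      rw [hWv, hsub] at this; linarith
    refine ⟨hvU, fun w hwU hle => ?_⟩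
    have hwt : ∀ t < T, dotp (φ t) u ≤ dotp (φ t) w := by
      intro t ht
      refine (hvt t ht).trans ?_
      exact Finset.sum_le_sum fun i _ =>
        mul_le_mul_of_nonneg_left (hle i) ((hnn t ht).1 i)
    have hvT : v ∈ seqSet U φ T := seqSet_climb U φ u hu v hvU hvt T le_rfl
    have hwT : w ∈ seqSet U φ T := seqSet_climb U φ u hu w hwU hwt T le_rfl
    obtain ⟨k, rfl⟩ : ∃ k, T = k + 1 := ⟨T - 1, (Nat.succ_pred_eq_of_pos hT).symm⟩
    have hk : k + 1 - 1 = k := rfl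
    rw [hk] at hpos
    have hvw : dotp (φ k) w ≤ dotp (φ k) v := hvT.2 w hwT.1
    have hwv : dotp (φ k) v ≤ dotp (φ k) w := hwT.2 v hvT.1
    have heq : ∑ i, φ k i * (w i - v i) = 0 := by
      have := le_antisymm hvw hwv
      simp only [dotp] at this
      simp [mul_sub, Finset.sum_sub_distrib, this]
    have hz := (Finset.sum_eq_zero_iff_of_nonneg (fun i _ =>
      mul_nonneg (hpos i).le (sub_nonneg.mpr (hle i)))).mp heq
    funext i
    have := hz i (Finset.mem_univ i)
    have h2 : w i - v i = 0 := by
      rcases mul_eq_zero.mp this with h | h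
      · exact absurd h (hpos i).ne'
      · exact h
    linarith
end

section
/- In a two-agent setting (n = 2) with U ⊆ ℝ² closed and convex: if a sequence (uᵏ) in U converges to u ∈ U, and each uᵏ maximizes some strictly positive linear functional ⟨φᵏ, ·⟩ over U, then u is Pareto optimal in U. -/
open Classical

/-! The normalised supporting directions `φᵏ / ∑ᵢ φᵏᵢ` have a limit point `ψ` in the standard
simplex, and `ψ` supports `U` at `u`. If some `v ∈ U` dominated `u` with `uᵢ < vᵢ`, then `ψ ⬝ (v - u) ≤ 0`
forces `ψᵢ = 0`, so in the plane `ψ = eⱼ` and `u` maximises the other coordinate `j` over `U`.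
Hence `uᵏⱼ ≤ uⱼ ≤ vⱼ`, and `φᵏ ⬝ v ≤ φᵏ ⬝ uᵏ` with `φᵏ > 0` gives `vᵢ ≤ uᵏᵢ → uᵢ`, a contradiction. -/

open Filter Topology

lemma dotp_smul_left {n : ℕ} (c : ℝ) (φ x : Fin n → ℝ) : dotp (c • φ) x = c * dotp φ x := by
  simp only [dotp, Pi.smul_apply, smul_eq_mul, Finset.mul_sum, mul_assoc]

lemma Fin.sum_two_of_ne {M : Type*} [AddCommMonoid M] {i j : Fin 2} (hij : i ≠ j) (f : Fin 2 → M) :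
    ∑ k, f k = f i + f j := by
  fin_cases i <;> fin_cases j <;> simp_all [Fin.sum_univ_two, add_comm]

lemma dotp_fin_two {i j : Fin 2} (hij : i ≠ j) (φ x : Fin 2 → ℝ) :
    dotp φ x = φ i * x i + φ j * x j :=
  Fin.sum_two_of_ne hij _

lemma continuous_dotp {n : ℕ} :
    Continuous fun p : (Fin n → ℝ) × (Fin n → ℝ) => dotp p.1 p.2 := by
  unfold dotp
  fun_prop

section NormalCone

variable {n : ℕ} {U : Set (Fin n → ℝ)}

lemma smul_mem_normalCone {φ x : Fin n → ℝ} {c : ℝ} (hc : 0 ≤ c) (hφ : φ ∈ NormalCone U x) :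
    c • φ ∈ NormalCone U x := fun v hv => by
  simpa only [dotp_smul_left] using mul_le_mul_of_nonneg_left (hφ v hv) hc

lemma mem_normalCone_of_tendsto {x φ : ℕ → Fin n → ℝ} {u ψ : Fin n → ℝ}
    (hx : Tendsto x atTop (𝓝 u)) (hφ : Tendsto φ atTop (𝓝 ψ))
    (hmem : ∀ k, φ k ∈ NormalCone U (x k)) : ψ ∈ NormalCone U u := fun v hv =>
  le_of_tendsto_of_tendsto'
    ((continuous_dotp.tendsto _).comp (hφ.prodMk_nhds tendsto_const_nhds))
    ((continuous_dotp.tendsto _).comp (hφ.prodMk_nhds hx)) fun k => hmem k v hv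

lemma inv_sum_smul_mem_stdSimplex [NeZero n] {φ : Fin n → ℝ} (hφ : ∀ i, 0 < φ i) :
    (∑ i, φ i)⁻¹ • φ ∈ stdSimplex ℝ (Fin n) := by
  have hsum : 0 < ∑ i, φ i := Finset.sum_pos (fun i _ => hφ i) Finset.univ_nonempty
  refine ⟨fun i => mul_nonneg (inv_nonneg.2 hsum.le) (hφ i).le, ?_⟩
  simp only [Pi.smul_apply, smul_eq_mul, ← Finset.mul_sum]
  exact inv_mul_cancel₀ hsum.ne'

lemma exists_mem_stdSimplex_mem_normalCone_of_tendsto [NeZero n] {x φ : ℕ → Fin n → ℝ}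
    {u : Fin n → ℝ} (hx : Tendsto x atTop (𝓝 u)) (hφ : ∀ k i, 0 < φ k i)
    (hmem : ∀ k, φ k ∈ NormalCone U (x k)) :
    ∃ ψ ∈ stdSimplex ℝ (Fin n), ψ ∈ NormalCone U u := by
  obtain ⟨ψ, hψ, s, hs, hlim⟩ := (isCompact_stdSimplex ℝ (Fin n)).tendsto_subseq
    fun k => inv_sum_smul_mem_stdSimplex (hφ k)
  refine ⟨ψ, hψ, mem_normalCone_of_tendsto (hx.comp hs.tendsto_atTop) hlim fun k => ?_⟩
  exact smul_mem_normalCone (inv_nonneg.2 (Finset.sum_nonneg fun i _ => (hφ (s k) i).le))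
    (hmem (s k))

lemma eq_zero_of_mem_normalCone_of_lt {ψ u v : Fin n → ℝ} (hψ : ∀ i, 0 ≤ ψ i)
    (hN : ψ ∈ NormalCone U u) (hv : v ∈ U) (hle : ∀ i, u i ≤ v i) {i : Fin n}
    (hi : u i < v i) : ψ i = 0 := by
  have hterm : ∀ i, 0 ≤ ψ i * (v i - u i) := fun i => mul_nonneg (hψ i) (sub_nonneg.2 (hle i))
  have hsum : ∑ i, ψ i * (v i - u i) = 0 := by
    refine le_antisymm ?_ (Finset.sum_nonneg fun i _ => hterm i)
    simpa [dotp, mul_sub, Finset.sum_sub_distrib] using hN v hv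
  have := (Finset.sum_eq_zero_iff_of_nonneg fun i _ => hterm i).1 hsum i (Finset.mem_univ i)
  exact (mul_eq_zero.1 this).resolve_right (sub_pos.2 hi).ne'

end NormalCone

lemma le_of_mem_normalCone_fin_two {U : Set (Fin 2 → ℝ)} {ψ u : Fin 2 → ℝ}
    (hψ : ψ ∈ stdSimplex ℝ (Fin 2)) (hN : ψ ∈ NormalCone U u) {i j : Fin 2} (hij : i ≠ j)
    (hi : ψ i = 0) {w : Fin 2 → ℝ} (hw : w ∈ U) : w j ≤ u j := by
  have hj : ψ j = 1 := by simpa [Fin.sum_two_of_ne hij, hi] using hψ.2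
  simpa [dotp_fin_two hij, hi, hj] using hN w hw

lemma le_of_dotp_le_fin_two {φ v x : Fin 2 → ℝ} (hφ : ∀ i, 0 < φ i) {i j : Fin 2} (hij : i ≠ j)
    (h : dotp φ v ≤ dotp φ x) (hj : x j ≤ v j) : v i ≤ x i := by
  rw [dotp_fin_two hij, dotp_fin_two hij] at h
  have : φ j * x j ≤ φ j * v j := mul_le_mul_of_nonneg_left hj (hφ j).le
  exact le_of_mul_le_mul_left (by linarith) (hφ i)

theorem stmt16_general (U : Set (Fin 2 → ℝ))
    (uk : ℕ → (Fin 2 → ℝ)) (huk : ∀ k, uk k ∈ U)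
    (φ : ℕ → (Fin 2 → ℝ)) (hφ : ∀ k, ∀ i, 0 < φ k i)
    (hmax : ∀ k, ∀ v ∈ U, dotp (φ k) v ≤ dotp (φ k) (uk k))
    (u : Fin 2 → ℝ) (huU : u ∈ U)
    (hlim : Filter.Tendsto uk Filter.atTop (nhds u)) :
    Pareto U u := by
  refine ⟨huU, fun v hv hle => ?_⟩
  by_contra hne
  obtain ⟨i, hi⟩ : ∃ i, u i < v i := by
    by_contra! h
    exact hne (funext fun i => le_antisymm (h i) (hle i))
  obtain ⟨j, hji⟩ := exists_ne i
  obtain ⟨ψ, hψ, hN⟩ := exists_mem_stdSimplex_mem_normalCone_of_tendsto hlim hφ hmax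
  have hψi := eq_zero_of_mem_normalCone_of_lt hψ.1 hN hv hle hi
  have hvi : ∀ k, v i ≤ uk k i := fun k =>
    le_of_dotp_le_fin_two (hφ k) hji.symm (hmax k v hv)
      ((le_of_mem_normalCone_fin_two hψ hN hji.symm hψi (huk k)).trans (hle j))
  exact (ge_of_tendsto' (tendsto_pi_nhds.1 hlim i) hvi).not_gt hi

theorem stmt16 (U : Set (Fin 2 → ℝ)) (hcl : IsClosed U) (hcv : Convex ℝ U)
    (uk : ℕ → (Fin 2 → ℝ)) (huk : ∀ k, uk k ∈ U)
    (φ : ℕ → (Fin 2 → ℝ)) (hφ : ∀ k, ∀ i, 0 < φ k i)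
    (hmax : ∀ k, ∀ v ∈ U, dotp (φ k) v ≤ dotp (φ k) (uk k))
    (u : Fin 2 → ℝ) (huU : u ∈ U)
    (hlim : Filter.Tendsto uk Filter.atTop (nhds u)) :
    Pareto U u :=
  stmt16_general U uk huk φ hφ hmax u huU hlim
end
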